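/- arXiv:2210.08839 — 2 statements merged into one kernel-verified Lean document; each statement's English description precedes it below -/
import Mathlib

section
/- The modified Gram-Schmidt projector admits a triangular compact form: let q₁, …, qₙ be vectors in ℝᵐ with qᵢᵀqᵢ = 1 for all i, let Q be the m×n matrix with columns q₁, …, qₙ, and let L be the strictly lower triangular part of QᵀQ (so L_{ij} = qᵢᵀqⱼ for i > j and L_{ij} = 0 otherwise). Then Iₙ + L is invertible and (I_m − qₙqₙᵀ)···(I_m − q₂q₂ᵀ)(I_m − q₁q₁ᵀ) = I_m − Q·(Iₙ + L)⁻¹·Qᵀ. -/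
/-!
Telescoping `Pₖ₊₁ = Pₖ - qₖ (qₖᵀ Pₖ)` writes the product of the first `k` factors as
`Pₖ = 1 - ∑_{j<k} qⱼ rⱼᵀ` with `rⱼᵀ = qⱼᵀ Pⱼ`, so `Pₙ = 1 - Q R` where `R` has rows `rⱼᵀ`.
Substituting this formula for `Pᵢ` into `rᵢᵀ = qᵢᵀ Pᵢ` gives `rᵢ + ∑_{j<i} (qᵢᵀ qⱼ) rⱼ = qᵢ`,
that is `(1 + L) R = Qᵀ`; as `1 + L` is unit lower triangular, `R = (1 + L)⁻¹ Qᵀ`.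
-/

open Matrix

section MGS

variable {R ι : Type*} [CommRing R] [Fintype ι] {n : ℕ}

def strictLowerGram (q : Fin n → ι → R) : Matrix (Fin n) (Fin n) R :=
  of fun i j => if j < i then q i ⬝ᵥ q j else 0

theorem det_one_add_strictLowerGram (q : Fin n → ι → R) :
    (1 + strictLowerGram q).det = 1 := by
  rw [det_of_isLowerTriangular]
  · simp [strictLowerGram]
  · intro i j (hij : i < j)
    simp [strictLowerGram, hij.ne, hij.not_gt]

variable [DecidableEq ι]

def mgsProduct (q : Fin n → ι → R) (k : ℕ) : Matrix ι ι R :=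
  ((List.ofFn fun i => 1 - vecMulVec (q i) (q i)).take k).reverse.prod

theorem mgsProduct_succ (q : Fin n → ι → R) (i : Fin n) :
    mgsProduct q ((i : ℕ) + 1) = (1 - vecMulVec (q i) (q i)) * mgsProduct q i := by
  simp [mgsProduct, List.take_add_one]

theorem mgsProduct_self (q : Fin n → ι → R) :
    mgsProduct q n = (List.ofFn fun i => 1 - vecMulVec (q i) (q i)).reverse.prod := by
  simp [mgsProduct, List.take_of_length_le]

def mgsRow (q : Fin n → ι → R) (j : Fin n) : ι → R :=
  q j ᵥ* mgsProduct q j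

theorem mgsProduct_eq_one_sub_sum (q : Fin n → ι → R) {k : ℕ} (hk : k ≤ n) :
    mgsProduct q k = 1 - ∑ j : Fin n with j.val < k, vecMulVec (q j) (mgsRow q j) := by
  induction k with
  | zero => simp [mgsProduct]
  | succ k ih =>
    let i : Fin n := ⟨k, hk⟩
    have hfilter : Finset.univ.filter (fun j : Fin n => j.val < k + 1) =
        insert i (Finset.univ.filter fun j : Fin n => j.val < k) := by
      ext j; simp [i, Fin.ext_iff]; omega
    have hstep : mgsProduct q (k + 1) = (1 - vecMulVec (q i) (q i)) * mgsProduct q k :=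
      mgsProduct_succ q i
    have hrow : mgsRow q i = q i ᵥ* mgsProduct q k := rfl
    rw [hfilter, Finset.sum_insert (by simp [i]), hstep, hrow, ih (by omega), sub_mul, one_mul,
      vecMulVec_mul]
    abel

theorem mgsProduct_eq_one_sub_mul_mgsRow (q : Fin n → ι → R) :
    mgsProduct q n = 1 - (of q)ᵀ * of (mgsRow q) := by
  rw [mgsProduct_eq_one_sub_sum q le_rfl]
  congr 1
  ext a b
  simp [mul_apply, vecMulVec_apply, Matrix.sum_apply]

theorem mgsRow_eq_sub_sum (q : Fin n → ι → R) (i : Fin n) :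
    mgsRow q i = q i - ∑ j with j < i, (q i ⬝ᵥ q j) • mgsRow q j := by
  conv_lhs => rw [mgsRow, mgsProduct_eq_one_sub_sum q i.isLt.le]
  simp [vecMul_sub, vecMul_sum, vecMul_vecMulVec]

theorem one_add_strictLowerGram_mul_mgsRow (q : Fin n → ι → R) :
    (1 + strictLowerGram q) * of (mgsRow q) = of q := by
  ext i a
  have hrow := congrFun (mgsRow_eq_sub_sum q i) a
  simp only [Pi.sub_apply, Finset.sum_apply, Pi.smul_apply, smul_eq_mul, strictLowerGram,
    mul_apply, Matrix.add_apply, one_apply, of_apply, add_mul, ite_mul, one_mul, zero_mul,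
    Finset.sum_add_distrib, Finset.sum_ite_eq, Finset.mem_univ, ↓reduceIte, Finset.sum_ite,
    Finset.sum_const_zero, add_zero] at hrow ⊢
  linear_combination hrow

theorem ofFn_one_sub_vecMulVec_reverse_prod (q : Fin n → ι → R) :
    (List.ofFn fun i => 1 - vecMulVec (q i) (q i)).reverse.prod =
      1 - (of q)ᵀ * (1 + strictLowerGram q)⁻¹ * of q := by
  have hdet : IsUnit (1 + strictLowerGram q).det := by simp [det_one_add_strictLowerGram]
  have hrows : of (mgsRow q) = (1 + strictLowerGram q)⁻¹ * of q := by
    rw [← one_add_strictLowerGram_mul_mgsRow q, nonsing_inv_mul_cancel_left _ _ hdet]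
  rw [← mgsProduct_self, mgsProduct_eq_one_sub_mul_mgsRow, hrows, Matrix.mul_assoc]

end MGS

theorem mgs_compact_projector_form_general
    (m n : ℕ)
    (q : Fin n → (Fin m → ℝ))
    (Q : Matrix (Fin m) (Fin n) ℝ) (hQ : Q = Matrix.of fun i j => q j i)
    (L : Matrix (Fin n) (Fin n) ℝ)
    (hL : L = Matrix.of fun i j : Fin n =>
        if (j : ℕ) < (i : ℕ) then (Qᵀ * Q) i j else 0) :
    IsUnit ((1 : Matrix (Fin n) (Fin n) ℝ) + L) ∧
      ((List.ofFn fun i : Fin n =>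
          (1 : Matrix (Fin m) (Fin m) ℝ) - vecMulVec (q i) (q i)).reverse).prod =
        1 - Q * ((1 : Matrix (Fin n) (Fin n) ℝ) + L)⁻¹ * Qᵀ := by
  have hL' : L = strictLowerGram q := by
    subst hL hQ
    ext i j
    simp [strictLowerGram, mul_apply, dotProduct]
  replace hQ : Q = (of q)ᵀ := hQ
  subst hL' hQ
  refine ⟨(isUnit_iff_isUnit_det _).2 ?_, ?_⟩
  · simp [det_one_add_strictLowerGram]
  · rw [ofFn_one_sub_vecMulVec_reverse_prod, transpose_transpose]

/-- The modified Gram-Schmidt projector admits a triangular compact form. -/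
theorem mgs_compact_projector_form
    (m n : ℕ)
    (q : Fin n → (Fin m → ℝ)) (hq : ∀ i, q i ⬝ᵥ q i = 1)
    (Q : Matrix (Fin m) (Fin n) ℝ) (hQ : Q = Matrix.of fun i j => q j i)
    (L : Matrix (Fin n) (Fin n) ℝ)
    (hL : L = Matrix.of fun i j : Fin n =>
        if (j : ℕ) < (i : ℕ) then (Qᵀ * Q) i j else 0) :
    IsUnit ((1 : Matrix (Fin n) (Fin n) ℝ) + L) ∧
      ((List.ofFn fun i : Fin n =>
          (1 : Matrix (Fin m) (Fin m) ℝ) - vecMulVec (q i) (q i)).reverse).prod =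
        1 - Q * ((1 : Matrix (Fin n) (Fin n) ℝ) + L)⁻¹ * Qᵀ :=
  mgs_compact_projector_form_general m n q Q hQ L hL
end

section
/- Block two-term compact projector identity: let Q₁ be a real m×n₁ matrix with Q₁ᵀQ₁ = I_{n₁} and Q₂ a real m×n₂ matrix with Q₂ᵀQ₂ = I_{n₂}. Then (I_m − Q₂Q₂ᵀ)(I_m − Q₁Q₁ᵀ) = I_m − [Q₁ Q₂] · T · [Q₁ Q₂]ᵀ, where T is the (n₁+n₂)×(n₁+n₂) block lower unitriangular matrix with diagonal blocks I_{n₁}, I_{n₂}, lower-left block −Q₂ᵀQ₁, and upper-right block 0. -/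
open Matrix

theorem Matrix.one_sub_mul_one_sub_eq_one_sub_fromCols_mul_fromBlocks_mul_fromRows
    {R m n₁ n₂ : Type*} [Ring R] [Fintype m] [DecidableEq m] [Fintype n₁] [DecidableEq n₁]
    [Fintype n₂] [DecidableEq n₂]
    (U₁ : Matrix m n₁ R) (V₁ : Matrix n₁ m R) (U₂ : Matrix m n₂ R) (V₂ : Matrix n₂ m R) :
    (1 - U₂ * V₂) * (1 - U₁ * V₁) =
      1 - fromCols U₁ U₂ * (fromBlocks 1 0 (-(V₂ * U₁)) 1 : Matrix (n₁ ⊕ n₂) (n₁ ⊕ n₂) R) *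
        fromRows V₁ V₂ := by
  rw [Matrix.fromCols_mul_fromBlocks, Matrix.fromCols_mul_fromRows]
  simp only [Matrix.mul_one, Matrix.mul_zero, Matrix.mul_neg, Matrix.add_mul, Matrix.neg_mul,
    Matrix.sub_mul, Matrix.mul_sub, Matrix.one_mul, zero_add, Matrix.mul_assoc]
  abel

theorem block_two_term_compact_projector_general
    (m n₁ n₂ : ℕ)
    (Q₁ : Matrix (Fin m) (Fin n₁) ℝ)
    (Q₂ : Matrix (Fin m) (Fin n₂) ℝ)
    (T : Matrix (Fin n₁ ⊕ Fin n₂) (Fin n₁ ⊕ Fin n₂) ℝ)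
    (hT : T = fromBlocks 1 0 (-(Q₂ᵀ * Q₁)) 1) :
    (1 - Q₂ * Q₂ᵀ) * (1 - Q₁ * Q₁ᵀ) =
      1 - fromCols Q₁ Q₂ * T * (fromCols Q₁ Q₂)ᵀ := by
  rw [hT, transpose_fromCols]
  exact Matrix.one_sub_mul_one_sub_eq_one_sub_fromCols_mul_fromBlocks_mul_fromRows _ _ _ _

/-- Block two-term compact projector identity. -/
theorem block_two_term_compact_projector
    (m n₁ n₂ : ℕ)
    (Q₁ : Matrix (Fin m) (Fin n₁) ℝ) (hQ₁ : Q₁ᵀ * Q₁ = 1)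
    (Q₂ : Matrix (Fin m) (Fin n₂) ℝ) (hQ₂ : Q₂ᵀ * Q₂ = 1)
    (T : Matrix (Fin n₁ ⊕ Fin n₂) (Fin n₁ ⊕ Fin n₂) ℝ)
    (hT : T = fromBlocks 1 0 (-(Q₂ᵀ * Q₁)) 1) :
    (1 - Q₂ * Q₂ᵀ) * (1 - Q₁ * Q₁ᵀ) =
      1 - fromCols Q₁ Q₂ * T * (fromCols Q₁ Q₂)ᵀ :=
  block_two_term_compact_projector_general m n₁ n₂ Q₁ Q₂ T hT
end
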